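/- arXiv:2305.06257 — 4 statements merged into one kernel-verified Lean document; each statement's English description precedes it below -/
import Mathlib

section
/- Let a ∈ (0,1) be irrational and define f_a(n,m) = n² + m - Σ_{k=1}^{2n-m} ⌊k·a/(1+a)⌋ + Σ_{k=1}^{m} ⌊k·a/(1-a)⌋ on the domain D = {(n,m) ∈ ℤ²_{≥0} : m ≤ 2n}. Then f_a : D → ℤ_{≥0} is a bijection. -/
/-!
Order the cone `D = {(n, m) : m ≤ 2n}` by the weight `w(n, m) = n (1 - a) + m a`. Since `a` is
irrational, `w` is injective on `ℕ × ℕ`, and its sublevel sets are finite, so the rank of a point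
(the number of points of `D` of smaller weight) is a bijection `D → ℕ`. It remains to see that the
rank of `(n, m)` is `f_a(n, m)`. Compare the points of smaller weight with the `n² + m`
lexicographic predecessors of `(n, m)` in `D`: the lexicographically smaller points of larger
weight are the `(n - X, m + k - 2X)` with `1 ≤ k ≤ 2n - m` and `1 ≤ X ≤ k a / (1 + a)`, and the
lexicographically larger points of smaller weight are the `(n + X, m - i)` with `1 ≤ i ≤ m` and
`1 ≤ X < i a / (1 - a)`; counting `X` in each fibre gives the two floor sums.
-/

open Set

section Rank

variable {α β : Type*} [LinearOrder β] (s : Set α) (φ : α → β)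

noncomputable def rankOn (p : α) : ℕ := {q ∈ s | φ q < φ p}.ncard

variable {s φ}

theorem rankOn_lt_rankOn (hfin : ∀ c, {q ∈ s | φ q < c}.Finite) {p q : α} (hq : q ∈ s)
    (h : φ q < φ p) : rankOn s φ q < rankOn s φ p := by
  refine ncard_lt_ncard ⟨fun r hr => ⟨hr.1, hr.2.trans h⟩, fun hsub => ?_⟩ (hfin _)
  exact (hsub ⟨hq, h⟩).2.false

theorem injOn_rankOn (hinj : InjOn φ s) (hfin : ∀ c, {q ∈ s | φ q < c}.Finite) :
    InjOn (rankOn s φ) s := by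
  intro p hp q hq h
  refine hinj hp hq (le_antisymm ?_ ?_) <;> by_contra! hlt
  · exact (rankOn_lt_rankOn hfin hq hlt).ne' h
  · exact (rankOn_lt_rankOn hfin hp hlt).ne h

theorem exists_le_rankOn (hinj : InjOn φ s) (hfin : ∀ c, {q ∈ s | φ q < c}.Finite)
    (hs : s.Infinite) (N : ℕ) : ∃ p ∈ s, N ≤ rankOn s φ p := by
  obtain ⟨t, hts, htfin, htcard⟩ := hs.exists_subset_ncard_eq (N + 1)
  obtain ⟨p, hpt, hmax⟩ := t.exists_max_image φ htfin (nonempty_of_ncard_ne_zero (by omega))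
  refine ⟨p, hts hpt, ?_⟩
  have hsub : t \ {p} ⊆ {q ∈ s | φ q < φ p} := fun q ⟨hqt, hqp⟩ =>
    ⟨hts hqt, (hmax q hqt).lt_of_ne fun h => hqp (hinj (hts hqt) (hts hpt) h)⟩
  have := ncard_le_ncard hsub (hfin _)
  rwa [ncard_sdiff_singleton_of_mem hpt, htcard] at this

theorem surjOn_rankOn (hinj : InjOn φ s) (hfin : ∀ c, {q ∈ s | φ q < c}.Finite)
    (hs : s.Infinite) : SurjOn (rankOn s φ) s univ := by
  intro N _
  obtain ⟨p, hp, hN⟩ := exists_le_rankOn hinj hfin hs N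
  have hinsert : insert p {q ∈ s | φ q < φ p} ⊆ s := insert_subset hp fun q hq => hq.1
  -- pigeonhole: the `rankOn p + 1` points of weight `≤ φ p` have distinct ranks `≤ rankOn p`
  have himage : rankOn s φ '' insert p {q ∈ s | φ q < φ p} = Iic (rankOn s φ p) := by
    refine eq_of_subset_of_ncard_le ?_ ?_ (finite_Iic (rankOn s φ p))
    · rintro _ ⟨q, rfl | hq, rfl⟩
      exacts [self_mem_Iic, (rankOn_lt_rankOn hfin hq.1 hq.2).le]
    · rw [(injOn_rankOn hinj hfin).mono hinsert |>.ncard_image, ← Finset.coe_Iic,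
        ncard_coe_finset, Nat.card_Iic,
        ncard_insert_of_notMem (fun h => h.2.false) (hfin _), rankOn]
  obtain ⟨q, hq, rfl⟩ := himage ▸ (show N ∈ Iic (rankOn s φ p) from hN)
  exact ⟨q, hinsert hq, rfl⟩

theorem bijOn_rankOn (hinj : InjOn φ s) (hfin : ∀ c, {q ∈ s | φ q < c}.Finite)
    (hs : s.Infinite) : BijOn (rankOn s φ) s univ :=
  ⟨mapsTo_univ _ _, injOn_rankOn hinj hfin, surjOn_rankOn hinj hfin hs⟩

end Rank

theorem ncard_setOf_mem_fiber (K : Finset ℕ) (T : ℕ → Finset ℕ) :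
    {q : ℕ × ℕ | q.1 ∈ K ∧ q.2 ∈ T q.1}.ncard = ∑ k ∈ K, (T k).card := by
  have hsigma : {q : ℕ × ℕ | q.1 ∈ K ∧ q.2 ∈ T q.1} =
      (fun x : Σ _ : ℕ, ℕ => (x.1, x.2)) '' ↑(K.sigma T) := by
    ext ⟨k, y⟩
    simp
  rw [hsigma, InjOn.ncard_image, ncard_coe_finset, Finset.card_sigma]
  rintro ⟨k, y⟩ - ⟨k', y'⟩ - h
  simp_all

theorem ncard_setOf_le_floor (K : Finset ℕ) (g : ℕ → ℝ) :
    {q : ℕ × ℕ | q.1 ∈ K ∧ 1 ≤ q.2 ∧ (q.2 : ℝ) ≤ g q.1}.ncard = ∑ k ∈ K, ⌊g k⌋₊ := by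
  have hfiber : {q : ℕ × ℕ | q.1 ∈ K ∧ 1 ≤ q.2 ∧ (q.2 : ℝ) ≤ g q.1} =
      {q : ℕ × ℕ | q.1 ∈ K ∧ q.2 ∈ Finset.Icc 1 ⌊g q.1⌋₊} := by
    ext ⟨k, X⟩
    simp +contextual [Nat.le_floor_iff' (Nat.one_le_iff_ne_zero.mp _)]
  rw [hfiber]
  refine (ncard_setOf_mem_fiber K fun k => Finset.Icc 1 ⌊g k⌋₊).trans ?_
  simp

theorem sum_range_two_mul_add_one (n : ℕ) : ∑ i ∈ Finset.range n, (2 * i + 1) = n ^ 2 := by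
  induction n with
  | zero => simp
  | succ n ih => rw [Finset.sum_range_succ, ih]; ring

theorem intCast_ncard_eq_ncard_sub_add {α : Type*} {A B : Set α} (hA : A.Finite) (hB : B.Finite) :
    (B.ncard : ℤ) = A.ncard - (A \ B).ncard + (B \ A).ncard := by
  have h₁ := ncard_sdiff_add_ncard A B hA hB
  have h₂ := ncard_sdiff_add_ncard B A hB hA
  rw [union_comm] at h₂
  omega

def cone : Set (ℕ × ℕ) := {p | p.2 ≤ 2 * p.1}

def weight (a : ℝ) (p : ℕ × ℕ) : ℝ := p.1 * (1 - a) + p.2 * a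

def lexBelow (n m : ℕ) : Set (ℕ × ℕ) := {q ∈ cone | q.1 < n ∨ q.1 = n ∧ q.2 < m}

theorem cone_infinite : cone.Infinite :=
  infinite_of_injective_forall_mem (f := fun n => (n, 0)) (fun _ _ h => congrArg Prod.fst h)
    fun n => show 0 ≤ 2 * n from Nat.zero_le _

theorem finite_lexBelow (n m : ℕ) : (lexBelow n m).Finite :=
  ((finite_Iic n).prod (finite_Iic (2 * n))).subset fun q ⟨hq, hlex⟩ => by
    simp only [cone, mem_ofPred_eq, mem_prod, mem_Iic] at hq ⊢
    omega

theorem ncard_lexBelow {n m : ℕ} (hm : m ≤ 2 * n) : (lexBelow n m).ncard = n ^ 2 + m := by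
  have hfiber : lexBelow n m = {q : ℕ × ℕ | q.1 ∈ Finset.range (n + 1) ∧
      q.2 ∈ if q.1 < n then Finset.range (2 * q.1 + 1) else Finset.range m} := by
    ext ⟨x, y⟩
    simp only [lexBelow, cone, mem_ofPred_eq]
    split_ifs <;> simp only [Finset.mem_range] <;> omega
  rw [hfiber]
  refine (ncard_setOf_mem_fiber (Finset.range (n + 1))
    fun x => if x < n then Finset.range (2 * x + 1) else Finset.range m).trans ?_
  rw [Finset.sum_range_succ, if_neg (lt_irrefl n),
    Finset.sum_congr rfl fun x hx => by rw [if_pos (Finset.mem_range.1 hx)]]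
  simp [sum_range_two_mul_add_one]

section Weight

variable {a : ℝ}

theorem eq_zero_of_mul_one_sub_eq_mul (hirr : Irrational a) {u v : ℤ}
    (h : (u : ℝ) * (1 - a) = v * a) : u = 0 ∧ v = 0 := by
  by_cases huv : u + v = 0
  · have : (u : ℝ) = 0 := by
      have hv : (v : ℝ) = -u := by exact_mod_cast eq_neg_of_add_eq_zero_right huv
      rw [hv] at h
      linarith
    have hu : u = 0 := by exact_mod_cast this
    exact ⟨hu, by omega⟩
  · refine absurd ?_ ((hirr.intCast_mul huv).ne_int u)
    push_cast
    linarith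

theorem weight_injective (hirr : Irrational a) : Function.Injective (weight a) := by
  rintro ⟨x, y⟩ ⟨x', y'⟩ h
  have key : (((x : ℤ) - x' : ℤ) : ℝ) * (1 - a) = (((y' : ℤ) - y : ℤ) : ℝ) * a := by
    simp only [weight] at h
    push_cast
    linarith
  obtain ⟨hx, hy⟩ := eq_zero_of_mul_one_sub_eq_mul hirr key
  simp only [Prod.mk.injEq]
  omega

theorem finite_setOf_weight_lt (ha0 : 0 < a) (ha1 : a < 1) (c : ℝ) :
    {q | weight a q < c}.Finite := by
  refine ((finite_Iic ⌊c / (1 - a)⌋₊).prod (finite_Iic ⌊c / a⌋₊)).subset fun ⟨x, y⟩ hq => ?_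
  have hx : (0 : ℝ) ≤ x * (1 - a) := mul_nonneg (Nat.cast_nonneg _) (by linarith)
  have hy : (0 : ℝ) ≤ y * a := mul_nonneg (Nat.cast_nonneg _) ha0.le
  simp only [weight, mem_ofPred_eq] at hq
  refine ⟨Nat.le_floor ?_, Nat.le_floor ?_⟩
  · rw [le_div_iff₀ (by linarith)]; linarith
  · rw [le_div_iff₀ ha0]; linarith

theorem weight_sub_weight (x y n m : ℕ) :
    weight a (x, y) - weight a (n, m) = ((x : ℝ) - n) * (1 - a) + ((y : ℝ) - m) * a := by
  simp only [weight]; ring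

section Counting

variable {n m : ℕ}

theorem lt_and_lt_of_mem_lexBelow_diff (ha0 : 0 < a) (ha1 : a < 1) {x y : ℕ}
    (hq : (x, y) ∈ lexBelow n m \ {q ∈ cone | weight a q < weight a (n, m)}) :
    x < n ∧ m < y ∧ ((n : ℝ) - x) * (1 - a) ≤ ((y : ℝ) - m) * a := by
  obtain ⟨⟨hxy, hlex : x < n ∨ x = n ∧ y < m⟩, hw⟩ := hq
  have hle : 0 ≤ weight a (x, y) - weight a (n, m) :=
    sub_nonneg.2 (not_lt.1 fun h => hw ⟨hxy, h⟩)
  rw [weight_sub_weight] at hle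
  have hxn : x < n := by
    refine hlex.resolve_right fun ⟨hx, hy⟩ => ?_
    have : (y : ℝ) < m := by exact_mod_cast hy
    rw [hx, sub_self, zero_mul, zero_add] at hle
    nlinarith
  have hxn' : (x : ℝ) + 1 ≤ n := by exact_mod_cast hxn
  have hmy : 0 < ((y : ℝ) - m) * a := by nlinarith
  have hmy' : (m : ℝ) < y := sub_pos.1 (pos_of_mul_pos_left hmy ha0.le)
  exact ⟨hxn, by exact_mod_cast hmy', by linarith⟩

theorem lt_and_lt_of_mem_diff_lexBelow (ha0 : 0 < a) (ha1 : a < 1) {x y : ℕ}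
    (hq : (x, y) ∈ {q ∈ cone | weight a q < weight a (n, m)} \ lexBelow n m) :
    n < x ∧ y < m ∧ ((x : ℝ) - n) * (1 - a) < ((m : ℝ) - y) * a := by
  obtain ⟨⟨hxy, hw⟩, hlex⟩ := hq
  have hlex' : ¬(x < n ∨ x = n ∧ y < m) := fun h => hlex ⟨hxy, h⟩
  have hlt := sub_neg.2 hw
  rw [weight_sub_weight] at hlt
  have hnx : n < x := by
    by_contra! hxn
    have hx : x = n := by omega
    rw [hx, sub_self, zero_mul, zero_add] at hlt
    have : (y : ℝ) < m := sub_neg.1 (neg_of_mul_neg_left hlt ha0.le)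
    exact hlex' (Or.inr ⟨hx, by exact_mod_cast this⟩)
  have hnx' : (n : ℝ) + 1 ≤ x := by exact_mod_cast hnx
  have hym : 0 < ((m : ℝ) - y) * a := by nlinarith
  have hym' : (y : ℝ) < m := sub_pos.1 (pos_of_mul_pos_left hym ha0.le)
  exact ⟨hnx, by exact_mod_cast hym', by linarith⟩

theorem two_mul_lt_of_le_mul_div (ha0 : 0 < a) (ha1 : a < 1) {k X : ℕ} (hX : 1 ≤ X)
    (h : (X : ℝ) ≤ k * a / (1 + a)) : 2 * X < k := by
  rw [le_div_iff₀ (by linarith)] at h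
  have hX' : (1 : ℝ) ≤ X := by exact_mod_cast hX
  by_contra! hk
  have hk' : (k : ℝ) ≤ 2 * X := by exact_mod_cast hk
  nlinarith

theorem ncard_lexBelow_diff (ha0 : 0 < a) (ha1 : a < 1) (hm : m ≤ 2 * n) :
    (lexBelow n m \ {q ∈ cone | weight a q < weight a (n, m)}).ncard =
      ∑ k ∈ Finset.Icc 1 (2 * n - m), ⌊(k : ℝ) * a / (1 + a)⌋₊ := by
  rw [← ncard_setOf_le_floor]
  refine BijOn.ncard_eq (f := fun q => (q.2 + 2 * (n - q.1) - m, n - q.1))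
    (InvOn.bijOn (f' := fun q => (n - q.2, m + q.1 - 2 * q.2)) ⟨?_, ?_⟩ ?_ ?_)
  · rintro ⟨x, y⟩ hq
    obtain ⟨hxn, hmy, -⟩ := lt_and_lt_of_mem_lexBelow_diff ha0 ha1 hq
    simp only [Prod.mk.injEq]
    omega
  · rintro ⟨k, X⟩ ⟨hk, hX, hXk⟩
    have := two_mul_lt_of_le_mul_div ha0 ha1 hX hXk
    rw [Finset.mem_Icc] at hk
    simp only [Prod.mk.injEq]
    omega
  · rintro ⟨x, y⟩ hq
    obtain ⟨hxn, hmy, hw⟩ := lt_and_lt_of_mem_lexBelow_diff ha0 ha1 hq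
    have hxy : y ≤ 2 * x := hq.1.1
    simp only [mem_ofPred_eq, Finset.mem_Icc]
    refine ⟨by omega, by omega, ?_⟩
    rw [le_div_iff₀ (by linarith)]
    push_cast [Nat.cast_sub hxn.le, Nat.cast_sub (show m ≤ y + 2 * (n - x) by omega), hxn.le]
    linarith
  · rintro ⟨k, X⟩ ⟨hk, hX, hXk⟩
    dsimp only at hk hX hXk
    have h2X := two_mul_lt_of_le_mul_div ha0 ha1 hX hXk
    rw [Finset.mem_Icc] at hk
    simp only [lexBelow, cone, mem_sdiff, mem_ofPred_eq, not_and, not_lt]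
    refine ⟨⟨by omega, Or.inl (by omega)⟩, fun _ => ?_⟩
    have := weight_sub_weight (a := a) (n - X) (m + k - 2 * X) n m
    rw [le_div_iff₀ (by linarith)] at hXk
    push_cast [Nat.cast_sub (show X ≤ n by omega),
      Nat.cast_sub (show 2 * X ≤ m + k by omega)] at this
    linarith

theorem ncard_diff_lexBelow (ha0 : 0 < a) (ha1 : a < 1) (hirr : Irrational a) (hm : m ≤ 2 * n) :
    ({q ∈ cone | weight a q < weight a (n, m)} \ lexBelow n m).ncard =
      ∑ i ∈ Finset.Icc 1 m, ⌊(i : ℝ) * a / (1 - a)⌋₊ := by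
  rw [← ncard_setOf_le_floor]
  refine BijOn.ncard_eq (f := fun q => (m - q.2, q.1 - n))
    (InvOn.bijOn (f' := fun q => (n + q.2, m - q.1)) ⟨?_, ?_⟩ ?_ ?_)
  · rintro ⟨x, y⟩ hq
    obtain ⟨hnx, hym, -⟩ := lt_and_lt_of_mem_diff_lexBelow ha0 ha1 hq
    simp only [Prod.mk.injEq]
    omega
  · rintro ⟨i, X⟩ ⟨hi, -, -⟩
    rw [Finset.mem_Icc] at hi
    simp only [Prod.mk.injEq]
    omega
  · rintro ⟨x, y⟩ hq
    obtain ⟨hnx, hym, hw⟩ := lt_and_lt_of_mem_diff_lexBelow ha0 ha1 hq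
    simp only [mem_ofPred_eq, Finset.mem_Icc]
    refine ⟨by omega, by omega, ?_⟩
    rw [le_div_iff₀ (by linarith)]
    push_cast [Nat.cast_sub hnx.le, Nat.cast_sub hym.le]
    linarith
  · rintro ⟨i, X⟩ ⟨hi, hX, hXi⟩
    dsimp only at hi hX hXi
    rw [Finset.mem_Icc] at hi
    rw [le_div_iff₀ (by linarith)] at hXi
    have hXi' : (X : ℝ) * (1 - a) < i * a := by
      refine hXi.lt_of_ne fun h => ?_
      have := (eq_zero_of_mul_one_sub_eq_mul hirr (u := X) (v := i) (by exact_mod_cast h)).1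
      omega
    simp only [lexBelow, cone, mem_sdiff, mem_ofPred_eq, not_and, not_or, not_lt]
    refine ⟨⟨by omega, ?_⟩, fun _ => ⟨by omega, by omega⟩⟩
    have := weight_sub_weight (a := a) (n + X) (m - i) n m
    push_cast [Nat.cast_sub hi.2] at this
    linarith

theorem intCast_rankOn_weight (ha0 : 0 < a) (ha1 : a < 1) (hirr : Irrational a)
    (hm : m ≤ 2 * n) :
    (rankOn cone (weight a) (n, m) : ℤ) = (n : ℤ) ^ 2 + m
      - ∑ k ∈ Finset.Icc 1 (2 * n - m), ⌊(k : ℝ) * a / (1 + a)⌋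
      + ∑ i ∈ Finset.Icc 1 m, ⌊(i : ℝ) * a / (1 - a)⌋ := by
  have hfin : {q ∈ cone | weight a q < weight a (n, m)}.Finite :=
    (finite_setOf_weight_lt ha0 ha1 _).subset fun _ hq => hq.2
  have hb (k : ℕ) : (⌊(k : ℝ) * a / (1 + a)⌋₊ : ℤ) = ⌊(k : ℝ) * a / (1 + a)⌋ :=
    Int.natCast_floor_eq_floor (by positivity)
  have hc (k : ℕ) : (⌊(k : ℝ) * a / (1 - a)⌋₊ : ℤ) = ⌊(k : ℝ) * a / (1 - a)⌋ :=
    Int.natCast_floor_eq_floor (div_nonneg (by positivity) (by linarith))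
  rw [rankOn, intCast_ncard_eq_ncard_sub_add (finite_lexBelow n m) hfin, ncard_lexBelow hm,
    ncard_lexBelow_diff ha0 ha1 hm, ncard_diff_lexBelow ha0 ha1 hirr hm]
  push_cast [hb, hc]
  rfl

end Counting

end Weight

theorem stmt_2 (a : ℝ) (ha0 : 0 < a) (ha1 : a < 1) (hirr : Irrational a) :
    Set.BijOn
      (fun p : ℕ × ℕ =>
        (p.1 : ℤ) ^ 2 + p.2
          - ∑ k ∈ Finset.Icc 1 (2 * p.1 - p.2), ⌊(k : ℝ) * a / (1 + a)⌋
          + ∑ k ∈ Finset.Icc 1 p.2, ⌊(k : ℝ) * a / (1 - a)⌋)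
      {p : ℕ × ℕ | p.2 ≤ 2 * p.1}
      {z : ℤ | 0 ≤ z} := by
  have hrank : BijOn (rankOn cone (weight a)) cone univ :=
    bijOn_rankOn (weight_injective hirr).injOn
      (fun c => (finite_setOf_weight_lt ha0 ha1 c).subset fun q hq => hq.2) cone_infinite
  have hcast : BijOn (Nat.cast : ℕ → ℤ) univ {z | 0 ≤ z} :=
    ⟨fun n _ => Int.natCast_nonneg n, Nat.cast_injective.injOn,
      fun z hz => ⟨z.toNat, trivial, Int.toNat_of_nonneg hz⟩⟩
  exact (hcast.comp hrank).congr fun p hp => intCast_rankOn_weight ha0 ha1 hirr hp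
end

section
/- Let a ∈ (0,1) be irrational and (n,m) ∈ ℤ²_{≥0} with m ≤ 2n. The number of lattice points (x,y) ∈ ℤ²_{≥0} with y ≤ 2x that lie on or below the line of slope -(1-a)/a through (n,m) (i.e. satisfying (1-a)·x + a·y ≤ (1-a)·n + a·m) equals f_a(n,m) + 1, where f_a(n,m) = n² + m - Σ_{k=1}^{2n-m} ⌊k·a/(1+a)⌋ + Σ_{k=1}^{m} ⌊k·a/(1-a)⌋. -/
open Finset

/-! Cut the region along the vertical line `x = n`. To the right of it, row `y < m` holds
exactly `⌊(m - y) a / (1 - a)⌋` points. To the left, the region is the triangle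
`y ≤ 2x ≤ 2n`, with `(n + 1)²` points, minus the points strictly above the line. Those are
indexed by `d = n - x` and `k = y + 2d - m ∈ [1, 2n - m]` (`k` numbers the diagonals parallel
to `y = 2x`), and the condition reads `d < k a / (1 + a)`; so diagonal `k` carries
`⌈k a / (1 + a)⌉ = ⌊k a / (1 + a)⌋ + 1` of them, by irrationality of `a`. -/

lemma ncard_setOf_mem_fiber_s3 {α β : Type*} (s : Finset α) (t : α → Finset β) :
    {q : α × β | q.1 ∈ s ∧ q.2 ∈ t q.1}.ncard = ∑ i ∈ s, #(t i) := by
  rw [← card_sigma, ← card_map (Equiv.sigmaEquivProd α β).toEmbedding, ← Set.ncard_coe_finset]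
  congr 1
  ext ⟨i, j⟩
  simp

lemma finite_setOf_mem_fiber {α β : Type*} (s : Finset α) (t : α → Finset β) :
    {q : α × β | q.1 ∈ s ∧ q.2 ∈ t q.1}.Finite :=
  ((s.sigma t).finite_toSet.image (Equiv.sigmaEquivProd α β)).subset
    fun q hq => ⟨⟨q.1, q.2⟩, by simpa using hq, rfl⟩

lemma ncard_triangle (n : ℕ) : {p : ℕ × ℕ | p.1 ≤ n ∧ p.2 ≤ 2 * p.1}.ncard = (n + 1) ^ 2 := by
  have hsum : ∀ N, ∑ x ∈ range N, (2 * x + 1) = N ^ 2 := fun N => by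
    induction N with
    | zero => rfl
    | succ N ih => rw [sum_range_succ, ih]; ring
  have h : {p : ℕ × ℕ | p.1 ≤ n ∧ p.2 ≤ 2 * p.1} =
      {p : ℕ × ℕ | p.1 ∈ range (n + 1) ∧ p.2 ∈ range (2 * p.1 + 1)} := by
    ext; simp
  rw [h, ncard_setOf_mem_fiber_s3 (t := fun x : ℕ => range (2 * x + 1)), ← hsum]
  simp only [card_range]

lemma natCast_ceil_eq_floor_add_one {x : ℝ} (hx : Irrational x) (h0 : 0 ≤ x) :
    (⌈x⌉₊ : ℤ) = ⌊x⌋ + 1 := by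
  rw [Int.natCast_ceil_eq_ceil h0, Int.ceil_eq_floor_add_one_iff_notMem]
  rintro ⟨z, rfl⟩
  exact hx.ne_int z rfl

lemma irrational_natCast_mul_div_one_add {a : ℝ} (ha : Irrational a) (ha0 : 0 < a) {k : ℕ}
    (hk : k ≠ 0) : Irrational (k * a / (1 + a)) := by
  convert ((ha.inv.natCast_add 1).inv).natCast_mul hk using 1
  field_simp
  ring

lemma bijOn_triangle_above_line {a : ℝ} (ha0 : 0 < a) (ha1 : a < 1) {n m : ℕ} :
    Set.BijOn (fun q : ℕ × ℕ => (n - q.2, m + q.1 - 2 * q.2))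
      {q | q.1 ∈ Icc 1 (2 * n - m) ∧ q.2 ∈ range ⌈(q.1 : ℝ) * a / (1 + a)⌉₊}
      {p | p.1 ≤ n ∧ p.2 ≤ 2 * p.1 ∧
        (1 - a) * n + a * m < (1 - a) * p.1 + a * p.2} := by
  have hsrc : ∀ k d : ℕ, d < ⌈(k : ℝ) * a / (1 + a)⌉₊ ↔ (1 + a) * d < a * k := by
    intro k d
    rw [Nat.lt_ceil, lt_div_iff₀ (by linarith)]
    ring_nf
  have h2d : ∀ k d : ℕ, (1 + a) * d < a * k → 2 * d < k := by
    intro k d h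
    have : (2 * d : ℝ) < k := by nlinarith
    exact_mod_cast this
  have hm_lt : ∀ x y : ℕ, x ≤ n → (1 - a) * n + a * m < (1 - a) * x + a * y → m < y := by
    intro x y hx h
    have : (x : ℝ) ≤ n := by exact_mod_cast hx
    have : (m : ℝ) < y := by nlinarith
    exact_mod_cast this
  refine Set.InvOn.bijOn (f' := fun p : ℕ × ℕ => (p.2 + 2 * (n - p.1) - m, n - p.1))
    ⟨?_, ?_⟩ ?_ ?_
  · rintro ⟨k, d⟩ ⟨hk, hd⟩
    simp only [mem_Icc, hsrc, mem_range] at hk hd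
    have := h2d k d hd
    simp only [Prod.mk.injEq]
    omega
  · rintro ⟨x, y⟩ ⟨hx, -, hline⟩
    have := hm_lt x y hx hline
    simp only [Prod.mk.injEq]
    omega
  · rintro ⟨k, d⟩ ⟨hk, hd⟩
    simp only [mem_Icc, hsrc, mem_range] at hk hd
    have := h2d k d hd
    refine ⟨by simp, by dsimp only; omega, ?_⟩
    dsimp only
    rw [Nat.cast_sub (by omega), Nat.cast_sub (by omega)]
    push_cast
    nlinarith
  · rintro ⟨x, y⟩ ⟨hx, hy, hline⟩
    have := hm_lt x y hx hline
    dsimp only at hx hy hline ⊢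
    simp only [mem_Icc, hsrc, mem_range]
    refine ⟨by omega, ?_⟩
    have hmy : m ≤ y + 2 * (n - x) := by omega
    push_cast [hx, hmy]
    nlinarith

lemma bijOn_below_line_right {a : ℝ} (ha0 : 0 < a) (ha1 : a < 1) {n m : ℕ} (hm : m ≤ 2 * n) :
    Set.BijOn (fun q : ℕ × ℕ => (n + q.2, m - q.1))
      {q | q.1 ∈ Icc 1 m ∧ q.2 ∈ Icc 1 ⌊(q.1 : ℝ) * a / (1 - a)⌋₊}
      {p | n < p.1 ∧ p.2 ≤ 2 * p.1 ∧
        (1 - a) * p.1 + a * p.2 ≤ (1 - a) * n + a * m} := by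
  have hsrc : ∀ k e : ℕ, e ≤ ⌊(k : ℝ) * a / (1 - a)⌋₊ ↔ (1 - a) * e ≤ a * k := by
    intro k e
    rw [Nat.le_floor_iff (div_nonneg (by positivity) (by linarith)), le_div_iff₀ (by linarith)]
    ring_nf
  have hy_lt : ∀ x y : ℕ, n < x → (1 - a) * x + a * y ≤ (1 - a) * n + a * m → y < m := by
    intro x y hx h
    have : (n : ℝ) < x := by exact_mod_cast hx
    have : (y : ℝ) < m := by nlinarith
    exact_mod_cast this
  refine Set.InvOn.bijOn (f' := fun p : ℕ × ℕ => (m - p.2, p.1 - n)) ⟨?_, ?_⟩ ?_ ?_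
  · rintro ⟨k, e⟩ ⟨hk, -⟩
    simp only [mem_Icc] at hk
    simp only [Prod.mk.injEq]
    omega
  · rintro ⟨x, y⟩ ⟨hx, -, hline⟩
    have := hy_lt x y hx hline
    simp only [Prod.mk.injEq]
    omega
  · rintro ⟨k, e⟩ ⟨hk, he⟩
    simp only [mem_Icc, hsrc] at hk he
    refine ⟨by dsimp only; omega, by dsimp only; omega, ?_⟩
    dsimp only
    push_cast [hk.2]
    nlinarith
  · rintro ⟨x, y⟩ ⟨hx, -, hline⟩
    have := hy_lt x y hx hline
    dsimp only at hx hline ⊢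
    simp only [mem_Icc, hsrc]
    refine ⟨by omega, by omega, ?_⟩
    push_cast [hx.le, this.le]
    nlinarith

lemma ncard_triangle_above_line {a : ℝ} (ha0 : 0 < a) (ha1 : a < 1) (n m : ℕ) :
    {p : ℕ × ℕ | p.1 ≤ n ∧ p.2 ≤ 2 * p.1 ∧
        (1 - a) * n + a * m < (1 - a) * p.1 + a * p.2}.ncard
      = ∑ k ∈ Icc 1 (2 * n - m), ⌈(k : ℝ) * a / (1 + a)⌉₊ := by
  rw [← (bijOn_triangle_above_line ha0 ha1).ncard_eq,
    ncard_setOf_mem_fiber_s3 (t := fun k : ℕ => range ⌈(k : ℝ) * a / (1 + a)⌉₊)]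
  simp only [card_range]

lemma ncard_below_line_right {a : ℝ} (ha0 : 0 < a) (ha1 : a < 1) {n m : ℕ} (hm : m ≤ 2 * n) :
    {p : ℕ × ℕ | n < p.1 ∧ p.2 ≤ 2 * p.1 ∧
        (1 - a) * p.1 + a * p.2 ≤ (1 - a) * n + a * m}.ncard
      = ∑ k ∈ Icc 1 m, ⌊(k : ℝ) * a / (1 - a)⌋₊ := by
  rw [← (bijOn_below_line_right ha0 ha1 hm).ncard_eq,
    ncard_setOf_mem_fiber_s3 (t := fun k : ℕ => Icc 1 ⌊(k : ℝ) * a / (1 - a)⌋₊)]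
  simp only [Nat.card_Icc, Nat.add_sub_cancel]

lemma finite_below_line_right {a : ℝ} (ha0 : 0 < a) (ha1 : a < 1) {n m : ℕ} (hm : m ≤ 2 * n) :
    {p : ℕ × ℕ | n < p.1 ∧ p.2 ≤ 2 * p.1 ∧
        (1 - a) * p.1 + a * p.2 ≤ (1 - a) * n + a * m}.Finite :=
  (bijOn_below_line_right ha0 ha1 hm).image_eq ▸
    (finite_setOf_mem_fiber (Icc 1 m) fun k : ℕ => Icc 1 ⌊(k : ℝ) * a / (1 - a)⌋₊).image _

lemma ncard_below_line_add_ncard_triangle_above_line {a : ℝ} (ha0 : 0 < a) (ha1 : a < 1) {n m : ℕ}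
    (hm : m ≤ 2 * n) :
    {p : ℕ × ℕ | p.2 ≤ 2 * p.1 ∧ (1 - a) * p.1 + a * p.2 ≤ (1 - a) * n + a * m}.ncard
      + {p : ℕ × ℕ | p.1 ≤ n ∧ p.2 ≤ 2 * p.1 ∧
          (1 - a) * n + a * m < (1 - a) * p.1 + a * p.2}.ncard
      = (n + 1) ^ 2 + {p : ℕ × ℕ | n < p.1 ∧ p.2 ≤ 2 * p.1 ∧
          (1 - a) * p.1 + a * p.2 ≤ (1 - a) * n + a * m}.ncard := by
  set S := {p : ℕ × ℕ | p.2 ≤ 2 * p.1 ∧ (1 - a) * p.1 + a * p.2 ≤ (1 - a) * n + a * m}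
  set T := {p : ℕ × ℕ | p.1 ≤ n ∧ p.2 ≤ 2 * p.1}
  set H := {p : ℕ × ℕ | p.1 ≤ n}
  set B := {p : ℕ × ℕ | (1 - a) * p.1 + a * p.2 ≤ (1 - a) * n + a * m}
  have hleft : S ∩ H = T ∩ B := by
    ext; simp only [S, T, H, B, Set.mem_inter_iff, Set.mem_ofPred_eq]; tauto
  have hright : S \ H = {p : ℕ × ℕ | n < p.1 ∧ p.2 ≤ 2 * p.1 ∧
      (1 - a) * p.1 + a * p.2 ≤ (1 - a) * n + a * m} := by
    ext; simp only [S, H, Set.mem_sdiff, Set.mem_ofPred_eq, not_le]; tauto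
  have habove : T \ B = {p : ℕ × ℕ | p.1 ≤ n ∧ p.2 ≤ 2 * p.1 ∧
      (1 - a) * n + a * m < (1 - a) * p.1 + a * p.2} := by
    ext; simp only [T, B, Set.mem_sdiff, Set.mem_ofPred_eq, not_le]; tauto
  have hT : T.Finite := Set.finite_of_ncard_ne_zero (by rw [ncard_triangle]; positivity)
  have hS : S.Finite := by
    rw [← Set.inter_union_sdiff S H, hleft, hright]
    exact (hT.subset Set.inter_subset_left).union (finite_below_line_right ha0 ha1 hm)
  rw [← Set.ncard_inter_add_ncard_sdiff_eq_ncard S H hS, ← ncard_triangle n,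
    ← Set.ncard_inter_add_ncard_sdiff_eq_ncard T B hT, hleft, hright, habove]
  ring

theorem stmt_3 (a : ℝ) (ha0 : 0 < a) (ha1 : a < 1) (hirr : Irrational a)
    (n m : ℕ) (hm : m ≤ 2 * n) :
    ({p : ℕ × ℕ | p.2 ≤ 2 * p.1 ∧
        (1 - a) * p.1 + a * p.2 ≤ (1 - a) * n + a * m}.ncard : ℤ)
      = ((n : ℤ) ^ 2 + m
          - ∑ k ∈ Finset.Icc 1 (2 * n - m), ⌊(k : ℝ) * a / (1 + a)⌋
          + ∑ k ∈ Finset.Icc 1 m, ⌊(k : ℝ) * a / (1 - a)⌋) + 1 := by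
  have hcount := congrArg (Nat.cast : ℕ → ℤ)
    (ncard_below_line_add_ncard_triangle_above_line ha0 ha1 hm)
  rw [ncard_triangle_above_line ha0 ha1, ncard_below_line_right ha0 ha1 hm] at hcount
  have hceil : ∑ k ∈ Icc 1 (2 * n - m), (⌈(k : ℝ) * a / (1 + a)⌉₊ : ℤ)
      = ∑ k ∈ Icc 1 (2 * n - m), ⌊(k : ℝ) * a / (1 + a)⌋ + (2 * n - m : ℕ) := by
    rw [sum_congr rfl fun k hk => natCast_ceil_eq_floor_add_one
      (irrational_natCast_mul_div_one_add hirr ha0 (by simp at hk; omega)) (by positivity),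
      sum_add_distrib]
    simp
  have hfloor : ∑ k ∈ Icc 1 m, (⌊(k : ℝ) * a / (1 - a)⌋₊ : ℤ)
      = ∑ k ∈ Icc 1 m, ⌊(k : ℝ) * a / (1 - a)⌋ :=
    sum_congr rfl fun k _ => Int.natCast_floor_eq_floor (div_nonneg (by positivity) (by linarith))
  push_cast at hcount
  rw [hceil, hfloor] at hcount
  push_cast [hm] at hcount
  linarith
end

section
/- Define g(m₁, m₂) = (m₁+m₂)/2 - m₁²/4 + m₁m₂/2 - m₂²/4 + Σ_{k=1}^{m₁} ⌊k/(1+a)⌋ + Σ_{k=1}^{m₂} ⌊k/(1-a)⌋ for nonnegative integers m₁, m₂ with m₁ + m₂ even, and a ∈ (0,1) irrational. Then, under the substitution n = (m₁+m₂)/2, m = m₂, one has g(m₁,m₂) = n² + m - Σ_{k=1}^{2n-m} ⌊k·a/(1+a)⌋ + Σ_{k=1}^{m} ⌊k·a/(1-a)⌋. In particular g(m₁,m₂) is a nonnegative integer. -/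
/-!
Writing `x = k a / (1 + a)`, we have `k / (1 + a) = k - x`, and `x` is irrational for `k ≥ 1`,
so `⌊k / (1 + a)⌋ = k - 1 - ⌊x⌋`; likewise `⌊k / (1 - a)⌋ = k + ⌊k a / (1 - a)⌋`. Summing, the
linear parts are triangular numbers and the quadratic terms collapse to `n²`. For nonnegativity,
`⌊x⌋ ≤ ⌊k / (1 + a)⌋` gives `2⌊x⌋ ≤ k - 1`, so the subtracted sum is at most `m₁(m₁ - 1)/4 ≤ n²`.
-/

open Finset

lemma Irrational.floor_intCast_sub {x : ℝ} (hx : Irrational x) (k : ℤ) :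
    ⌊(k : ℝ) - x⌋ = k - 1 - ⌊x⌋ := by
  rw [sub_eq_add_neg, Int.floor_intCast_add, Int.floor_neg,
    (Int.ceil_eq_floor_add_one_iff_notMem x).mpr fun ⟨m, hm⟩ => hx.ne_int m hm.symm]
  ring

lemma Irrational.natCast_mul_div_one_add {a : ℝ} (ha : Irrational a) {k : ℕ} (hk : k ≠ 0) :
    Irrational (k * a / (1 + a)) := by
  have h1a : Irrational (1 + a) := by simpa using ha.intCast_add 1
  have : k * a / (1 + a) = k * (1 - (1 + a)⁻¹) := by
    field_simp [h1a.ne_zero]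
    ring
  rw [this]
  exact (by simpa using h1a.inv.intCast_sub 1 : Irrational (1 - (1 + a)⁻¹)).natCast_mul hk

lemma floor_natCast_div_one_add {a : ℝ} (ha : Irrational a) {k : ℕ} (hk : k ≠ 0) :
    ⌊(k : ℝ) / (1 + a)⌋ = k - 1 - ⌊k * a / (1 + a)⌋ := by
  have : (k : ℝ) / (1 + a) = ((k : ℤ) : ℝ) - k * a / (1 + a) := by
    field_simp [(by simpa using ha.intCast_add 1 : Irrational (1 + a)).ne_zero]
    push_cast
    ring
  rw [this, (ha.natCast_mul_div_one_add hk).floor_intCast_sub]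

lemma floor_natCast_div_one_sub {a : ℝ} (ha : a ≠ 1) (k : ℕ) :
    ⌊(k : ℝ) / (1 - a)⌋ = k + ⌊k * a / (1 - a)⌋ := by
  have : (k : ℝ) / (1 - a) = k * a / (1 - a) + k := by
    field_simp [sub_ne_zero.mpr ha.symm]
    ring
  rw [this, Int.floor_add_natCast, add_comm]

lemma sum_Icc_one_natCast (m : ℕ) : ∑ k ∈ Icc 1 m, (k : ℚ) = m * (m + 1) / 2 := by
  induction m with
  | zero => simp
  | succ n ih =>
    rw [sum_Icc_succ_top (by omega), ih]
    push_cast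
    ring

lemma sum_floor_natCast_div_one_add {a : ℝ} (ha : Irrational a) (m : ℕ) :
    ((∑ k ∈ Icc 1 m, ⌊(k : ℝ) / (1 + a)⌋ : ℤ) : ℚ)
      = m * (m - 1) / 2 - (∑ k ∈ Icc 1 m, ⌊(k : ℝ) * a / (1 + a)⌋ : ℤ) := by
  rw [sum_congr rfl fun k hk => floor_natCast_div_one_add ha (by grind)]
  push_cast
  rw [sum_sub_distrib, sum_sub_distrib, sum_Icc_one_natCast]
  simp only [sum_const, Nat.card_Icc, add_tsub_cancel_right, nsmul_eq_mul, mul_one, sub_left_inj]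
  ring

lemma sum_floor_natCast_div_one_sub {a : ℝ} (ha : a ≠ 1) (m : ℕ) :
    ((∑ k ∈ Icc 1 m, ⌊(k : ℝ) / (1 - a)⌋ : ℤ) : ℚ)
      = m * (m + 1) / 2 + (∑ k ∈ Icc 1 m, ⌊(k : ℝ) * a / (1 - a)⌋ : ℤ) := by
  simp_rw [floor_natCast_div_one_sub ha]
  push_cast
  rw [sum_add_distrib, sum_Icc_one_natCast]

lemma two_mul_floor_natCast_mul_div_one_add_le {a : ℝ} (ha : Irrational a) (ha0 : 0 ≤ a)
    (ha1 : a ≤ 1) {k : ℕ} (hk : k ≠ 0) :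
    2 * ⌊(k : ℝ) * a / (1 + a)⌋ ≤ k - 1 := by
  have : ⌊(k : ℝ) * a / (1 + a)⌋ ≤ ⌊(k : ℝ) / (1 + a)⌋ :=
    Int.floor_mono (by gcongr; exact mul_le_of_le_one_right k.cast_nonneg ha1)
  linarith [floor_natCast_div_one_add ha hk]

lemma sum_floor_natCast_mul_div_one_add_le {a : ℝ} (ha : Irrational a) (ha0 : 0 ≤ a)
    (ha1 : a ≤ 1) (m : ℕ) :
    ((∑ k ∈ Icc 1 m, ⌊(k : ℝ) * a / (1 + a)⌋ : ℤ) : ℚ) ≤ m * (m - 1) / 4 := by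
  have : 2 * ∑ k ∈ Icc 1 m, ⌊(k : ℝ) * a / (1 + a)⌋ ≤ ∑ k ∈ Icc 1 m, ((k : ℤ) - 1) := by
    rw [mul_sum]
    exact sum_le_sum fun k hk =>
      two_mul_floor_natCast_mul_div_one_add_le ha ha0 ha1 (by grind)
  have hq : (2 * ∑ k ∈ Icc 1 m, ⌊(k : ℝ) * a / (1 + a)⌋ : ℚ) ≤ ∑ k ∈ Icc 1 m, ((k : ℚ) - 1) := by
    exact_mod_cast this
  rw [sum_sub_distrib, sum_Icc_one_natCast] at hq
  simp only [sum_const, Nat.card_Icc, add_tsub_cancel_right, nsmul_eq_mul, mul_one] at hq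
  linarith

theorem stmt_6 (a : ℝ) (ha0 : 0 < a) (ha1 : a < 1) (hirr : Irrational a)
    (m₁ m₂ : ℕ) (heven : Even (m₁ + m₂)) :
    ((m₁ + m₂ : ℚ) / 2 - (m₁ : ℚ) ^ 2 / 4 + (m₁ : ℚ) * m₂ / 2 - (m₂ : ℚ) ^ 2 / 4
        + (∑ k ∈ Finset.Icc 1 m₁, ⌊(k : ℝ) / (1 + a)⌋ : ℤ)
        + (∑ k ∈ Finset.Icc 1 m₂, ⌊(k : ℝ) / (1 - a)⌋ : ℤ))
      = ((((m₁ + m₂) / 2 : ℕ) : ℚ) ^ 2 + (m₂ : ℚ)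
          - (∑ k ∈ Finset.Icc 1 (2 * ((m₁ + m₂) / 2) - m₂), ⌊(k : ℝ) * a / (1 + a)⌋ : ℤ)
          + (∑ k ∈ Finset.Icc 1 m₂, ⌊(k : ℝ) * a / (1 - a)⌋ : ℤ))
    ∧ 0 ≤ ((m₁ + m₂ : ℚ) / 2 - (m₁ : ℚ) ^ 2 / 4 + (m₁ : ℚ) * m₂ / 2 - (m₂ : ℚ) ^ 2 / 4
        + (∑ k ∈ Finset.Icc 1 m₁, ⌊(k : ℝ) / (1 + a)⌋ : ℤ)
        + (∑ k ∈ Finset.Icc 1 m₂, ⌊(k : ℝ) / (1 - a)⌋ : ℤ)) := by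
  obtain ⟨n, hn⟩ := heven
  have hn' : (m₁ : ℚ) + m₂ = 2 * n := by rw [two_mul]; exact_mod_cast hn
  rw [show (m₁ + m₂) / 2 = n by omega, show 2 * n - m₂ = m₁ by omega,
    sum_floor_natCast_div_one_add hirr, sum_floor_natCast_div_one_sub ha1.ne]
  have hS₁ := sum_floor_natCast_mul_div_one_add_le hirr ha0.le ha1.le m₁
  have hS₂ : (0 : ℚ) ≤ (∑ k ∈ Icc 1 m₂, ⌊(k : ℝ) * a / (1 - a)⌋ : ℤ) := by
    exact_mod_cast sum_nonneg fun k _ => Int.floor_nonneg.mpr (by bound)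
  constructor
  · linear_combination ((n : ℚ) / 2 + m₁ / 4 + m₂ / 4) * hn'
  · nlinarith [m₁.cast_nonneg (α := ℚ), m₂.cast_nonneg (α := ℚ)]
end

section
/- Let a ∈ (0,1) be irrational. For nonnegative integers m₁+m₂ even, set A(m₁,m₂) = m₁·2π/(1+a) + m₂·2π/(1-a). Then the values A(m₁,m₂) over all such pairs are pairwise distinct, and listing them in increasing order yields a sequence (c_k)_{k≥0} whose k-th term is the image of the k-th element under the index bijection; in particular c₀ = 0 and c₁ = 4π/(1+a). -/
/-!
The periods `2π/(1+a)` and `2π/(1-a)` have ratio `(1-a)/(1+a)`, which is irrational together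
with `a`, so a combination `m₁ω₁ + m₂ω₂` with integer coefficients determines them. Since
`0 < ω₁ ≤ ω₂`, a nonzero pair with `m₁ + m₂` even has `m₁ + m₂ ≥ 2`, hence value at least
`2ω₁`, which `(2, 0)` attains.
-/

theorem Irrational.one_sub_div_one_add {a : ℝ} (h : Irrational a) :
    Irrational ((1 - a) / (1 + a)) := by
  have h1a : 1 + a ≠ 0 := fun h0 => h.ne_int (-1) (by push_cast; linarith)
  have hrw : (1 - a) / (1 + a) = ((2 : ℤ) : ℝ) / ((1 : ℤ) + a) - (1 : ℤ) := by
    push_cast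
    field_simp
    ring
  rw [hrw]
  exact ((h.intCast_add 1).intCast_div two_ne_zero).sub_intCast 1

theorem Irrational.intCast_mul_add_intCast_mul_injective {x y : ℝ} (h : Irrational (x / y)) :
    Function.Injective fun p : ℤ × ℤ => (p.1 : ℝ) * x + p.2 * y := by
  have hy : y ≠ 0 := fun hy => h ⟨0, by simp [hy]⟩
  rintro ⟨m, n⟩ ⟨m', n'⟩ heq
  have hm : m = m' := by
    by_contra hne
    have hsub : ((m - m' : ℤ) : ℝ) ≠ 0 := by exact_mod_cast sub_ne_zero.mpr hne
    refine h.ne_rational (n' - n) (m - m') ?_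
    rw [div_eq_div_iff hy hsub]
    push_cast
    linarith
  subst hm
  have : (n : ℝ) = n' := mul_right_cancel₀ hy (by simpa using heq)
  simp_all

theorem Irrational.natCast_mul_add_natCast_mul_injective {x y : ℝ} (h : Irrational (x / y)) :
    Function.Injective fun p : ℕ × ℕ => (p.1 : ℝ) * x + p.2 * y :=
  h.intCast_mul_add_intCast_mul_injective.comp (Nat.cast_injective.prodMap Nat.cast_injective)

theorem isLeast_pos_natCast_mul_add_natCast_mul_of_even {x y : ℝ} (hx : 0 < x) (hxy : x ≤ y) :
    IsLeast {v : ℝ | ∃ p : ℕ × ℕ, Even (p.1 + p.2) ∧ v = p.1 * x + p.2 * y ∧ 0 < v} (2 * x) := by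
  refine ⟨⟨(2, 0), even_two, by simp, by positivity⟩, ?_⟩
  rintro v ⟨⟨m, n⟩, hev, rfl, hv⟩
  have hsum_ne_zero : m + n ≠ 0 := by
    rintro h0
    obtain ⟨rfl, rfl⟩ := Nat.add_eq_zero_iff.mp h0
    simp at hv
  have htwo_le : (2 : ℝ) ≤ m + n := by
    obtain ⟨k, hk⟩ := hev
    exact_mod_cast (by omega : 2 ≤ m + n)
  calc 2 * x ≤ (m + n) * x := by gcongr
    _ = m * x + n * x := add_mul ..
    _ ≤ m * x + n * y := by gcongr

open Real in
theorem stmt_8 (a : ℝ) (ha0 : 0 < a) (ha1 : a < 1) (hirr : Irrational a) :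
    Set.InjOn
        (fun p : ℕ × ℕ => (p.1 : ℝ) * (2 * π / (1 + a)) + (p.2 : ℝ) * (2 * π / (1 - a)))
        {p : ℕ × ℕ | Even (p.1 + p.2)}
    ∧ IsLeast
        {x : ℝ | ∃ p : ℕ × ℕ, Even (p.1 + p.2) ∧
          x = (p.1 : ℝ) * (2 * π / (1 + a)) + (p.2 : ℝ) * (2 * π / (1 - a)) ∧ 0 < x}
        (4 * π / (1 + a)) := by
  have h1a : 0 < 1 + a := by linarith
  have h1a' : 0 < 1 - a := by linarith
  have hratio : 2 * π / (1 + a) / (2 * π / (1 - a)) = (1 - a) / (1 + a) := by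
    field_simp
  constructor
  · refine (Irrational.natCast_mul_add_natCast_mul_injective ?_).injOn
    rw [hratio]
    exact hirr.one_sub_div_one_add
  · have hle : 2 * π / (1 + a) ≤ 2 * π / (1 - a) := by gcongr; linarith
    convert isLeast_pos_natCast_mul_add_natCast_mul_of_even (by positivity) hle using 1
    ring
end
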